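/- arXiv:2110.05831 — 5 statements merged into one kernel-verified Lean document; each statement's English description precedes it below -/
import Mathlib

section
/- Suppose w(z) = e^{cz}(a₀ + a₁e^z + ⋯ + a_k e^{kz}) with a₀ ≠ 0 is a nontrivial solution of w'' + P(e^z)w' + Q(e^z)w = 0, where P and Q are polynomials. Then c² + c·P(0) + Q(0) = 0. -/
open Complex Finset Filter Topology

private lemma keyDeriv (a b z : ℂ) :
    HasDerivAt (fun z => a * Complex.exp (b * z)) (a * b * Complex.exp (b * z)) z := by
  have h := (((hasDerivAt_id z).const_mul b).cexp).const_mul a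
  simp only [id_eq, mul_one] at h
  rw [show a * b * Complex.exp (b * z) = a * (Complex.exp (b * z) * b) by ring]
  exact h

theorem stmt3 (P Q : Polynomial ℂ) (k : ℕ) (c : ℂ) (a : ℕ → ℂ) (ha : a 0 ≠ 0) (w : ℂ → ℂ)
    (hw : w = fun z => Complex.exp (c * z) * ∑ j ∈ Finset.range (k + 1), a j * Complex.exp (j * z))
    (hode : ∀ z : ℂ,
      deriv (deriv w) z + P.eval (Complex.exp z) * deriv w z + Q.eval (Complex.exp z) * w z = 0) :
    c ^ 2 + c * P.eval 0 + Q.eval 0 = 0 := by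
  have hwW : w = fun z => ∑ j ∈ range (k + 1), a j * Complex.exp ((c + j) * z) := by
    funext z
    simp only [hw, Finset.mul_sum]
    refine Finset.sum_congr rfl fun j _ => ?_
    rw [show (c + (j : ℂ)) * z = c * z + j * z by ring, Complex.exp_add]
    ring
  have hd1 : deriv w = fun z => ∑ j ∈ range (k + 1),
      (a j * (c + j)) * Complex.exp ((c + j) * z) := by
    funext z
    rw [hwW]
    exact (HasDerivAt.fun_sum fun j _ => keyDeriv (a j) (c + j) z).deriv
  have hd2 : deriv (deriv w) = fun z => ∑ j ∈ range (k + 1),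
      (a j * (c + j) * (c + j)) * Complex.exp ((c + j) * z) := by
    funext z
    rw [hd1]
    exact (HasDerivAt.fun_sum fun j _ => keyDeriv (a j * (c + j)) (c + j) z).deriv
  have hkey : ∀ z : ℂ,
      (∑ j ∈ range (k + 1), (a j * (c + j) * (c + j)) * Complex.exp ((j : ℂ) * z))
      + P.eval (Complex.exp z) * ∑ j ∈ range (k + 1), (a j * (c + j)) * Complex.exp ((j : ℂ) * z)
      + Q.eval (Complex.exp z) * ∑ j ∈ range (k + 1), a j * Complex.exp ((j : ℂ) * z) = 0 := by
    intro z
    have hS : ∀ b : ℕ → ℂ,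
        Complex.exp (-(c * z)) * ∑ j ∈ range (k + 1), b j * Complex.exp ((c + j) * z)
        = ∑ j ∈ range (k + 1), b j * Complex.exp ((j : ℂ) * z) := by
      intro b
      rw [Finset.mul_sum]
      refine Finset.sum_congr rfl fun j _ => ?_
      rw [mul_left_comm, ← Complex.exp_add]
      congr 2
      ring
    have h := hode z
    rw [hd2, hd1, hwW] at h
    rw [← hS (fun j => a j * (c + j) * (c + j)), ← hS (fun j => a j * (c + j)), ← hS a]
    linear_combination Complex.exp (-(c * z)) * h
  -- limits as z = -t, t → ∞
  have hE : Tendsto (fun t : ℝ => Complex.exp (-(t : ℂ))) atTop (𝓝 0) := by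
    have h1 : Tendsto (fun t : ℝ => Real.exp (-t)) atTop (𝓝 0) :=
      Real.tendsto_exp_atBot.comp tendsto_neg_atTop_atBot
    have h2 := (Complex.continuous_ofReal.tendsto 0).comp h1
    simp only [Complex.ofReal_zero] at h2
    convert h2 using 2 with t
    rw [Function.comp_apply, Complex.ofReal_exp]
    congr 1
    push_cast
    ring
  have hJ : ∀ j : ℕ, Tendsto (fun t : ℝ => Complex.exp ((j : ℂ) * (-(t : ℂ)))) atTop
      (𝓝 (if j = 0 then 1 else 0)) := by
    intro j
    rcases Nat.eq_zero_or_pos j with hj | hj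
    · simp [hj]
    · simp only [if_neg hj.ne']
      have h1 : Tendsto (fun t : ℝ => Real.exp (-((j : ℝ) * t))) atTop (𝓝 0) := by
        refine Real.tendsto_exp_atBot.comp ?_
        exact tendsto_neg_atBot_iff.mpr
          (Tendsto.const_mul_atTop (by exact_mod_cast hj) tendsto_id)
      have h2 := (Complex.continuous_ofReal.tendsto 0).comp h1
      simp only [Complex.ofReal_zero] at h2
      convert h2 using 2 with t
      rw [Function.comp_apply, Complex.ofReal_exp]
      congr 1
      push_cast
      ring
  have hA : ∀ b : ℕ → ℂ, Tendsto (fun t : ℝ =>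
      ∑ j ∈ range (k + 1), b j * Complex.exp ((j : ℂ) * (-(t : ℂ)))) atTop (𝓝 (b 0)) := by
    intro b
    have h := tendsto_finset_sum (range (k + 1)) fun j _ => ((hJ j).const_mul (b j))
    have hval : ∑ j ∈ range (k + 1), b j * (if j = 0 then (1 : ℂ) else 0) = b 0 := by
      rw [Finset.sum_eq_single 0]
      · simp
      · intro j _ hj; simp [hj]
      · intro h0; exact absurd (Finset.mem_range.mpr k.succ_pos) h0
    rwa [hval] at h
  have hPe : Tendsto (fun t : ℝ => P.eval (Complex.exp (-(t : ℂ)))) atTop (𝓝 (P.eval 0)) :=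
    (P.continuous.tendsto 0).comp hE
  have hQe : Tendsto (fun t : ℝ => Q.eval (Complex.exp (-(t : ℂ)))) atTop (𝓝 (Q.eval 0)) :=
    (Q.continuous.tendsto 0).comp hE
  have hbig : Tendsto (fun t : ℝ =>
      (∑ j ∈ range (k + 1), (a j * (c + j) * (c + j)) * Complex.exp ((j : ℂ) * (-(t : ℂ))))
      + P.eval (Complex.exp (-(t : ℂ))) *
          ∑ j ∈ range (k + 1), (a j * (c + j)) * Complex.exp ((j : ℂ) * (-(t : ℂ)))
      + Q.eval (Complex.exp (-(t : ℂ))) *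
          ∑ j ∈ range (k + 1), a j * Complex.exp ((j : ℂ) * (-(t : ℂ)))) atTop
      (𝓝 (a 0 * (c + ((0 : ℕ) : ℂ)) * (c + ((0 : ℕ) : ℂ))
        + P.eval 0 * (a 0 * (c + ((0 : ℕ) : ℂ))) + Q.eval 0 * a 0)) :=
    ((hA _).add (hPe.mul (hA _))).add (hQe.mul (hA _))
  have hfun : (fun t : ℝ =>
      (∑ j ∈ range (k + 1), (a j * (c + j) * (c + j)) * Complex.exp ((j : ℂ) * (-(t : ℂ))))
      + P.eval (Complex.exp (-(t : ℂ))) *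
          ∑ j ∈ range (k + 1), (a j * (c + j)) * Complex.exp ((j : ℂ) * (-(t : ℂ)))
      + Q.eval (Complex.exp (-(t : ℂ))) *
          ∑ j ∈ range (k + 1), a j * Complex.exp ((j : ℂ) * (-(t : ℂ))))
      = fun _ : ℝ => (0 : ℂ) := funext fun t => hkey (-(t : ℂ))
  rw [hfun] at hbig
  have hzero := tendsto_nhds_unique hbig tendsto_const_nhds
  have hfin : a 0 * (c ^ 2 + c * P.eval 0 + Q.eval 0) = 0 := by
    push_cast at hzero
    linear_combination hzero
  rcases mul_eq_zero.mp hfin with h | h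
  · exact absurd h ha
  · exact h
end

section
/- Let n ≥ 2 and let c₀, c₁ ∈ ℂ satisfy c₀ⁿ = 1 and n·c₀^{n-1}·c₁ = 1. Then c₁ = c₀/n; more generally, if c₀,…,c_m satisfy c₀ⁿ = nc₀^{n-1}c₁ = 1 together with the vanishing of the multinomial sums ∑_{j₀+⋯+j_m = n, j₁+2j₂+⋯+mj_m = k₀} (n!/(j₀!⋯j_m!)) c₀^{j₀}⋯c_m^{j_m} = 0 for k₀ = 2,…,m, then each c_j = s_j·c₀ for some rational number s_j depending only on n, m, j (and the s_j are nonzero). -/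
open Finset

section Aux

open Polynomial

private lemma stmt9_coeffP (m j : ℕ) (hj : j ≤ m) (c : ℕ → ℂ) :
    (∑ i : Fin (m+1), C (c i) * X ^ (i:ℕ)).coeff j = c j := by
  rw [Polynomial.finset_sum_coeff]
  rw [Finset.sum_eq_single (⟨j, by omega⟩ : Fin (m+1))]
  · simp
  · intro b _ hb
    rw [coeff_C_mul, coeff_X_pow, if_neg, mul_zero]
    intro h; apply hb; exact Fin.ext (by simp [← h])
  · simp

private lemma stmt9_bridge (m n k : ℕ) (c : ℕ → ℂ) :
    ∑ v ∈ (Finset.Nat.antidiagonalTuple (m + 1) n).filter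
        (fun v => ∑ i : Fin (m + 1), (i : ℕ) * v i = k),
      (Nat.multinomial Finset.univ v : ℂ) * ∏ i : Fin (m + 1), c i ^ v i
    = ((∑ i : Fin (m+1), C (c i) * X ^ (i:ℕ)) ^ n).coeff k := by
  rw [Finset.sum_pow_eq_sum_piAntidiag Finset.univ, Finset.piAntidiag_univ_fin_eq_antidiagonalTuple,
    Polynomial.finset_sum_coeff, Finset.sum_filter]
  refine Finset.sum_congr rfl fun v hv => ?_
  have h1 : ∀ i : Fin (m+1), (C (c i) * X ^ (i:ℕ)) ^ v i = C (c i ^ v i) * X ^ ((i:ℕ) * v i) := by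
    intro i; rw [mul_pow, ← C_pow, ← pow_mul]
  simp only [h1, Finset.prod_mul_distrib, ← map_prod, Finset.prod_pow_eq_pow_sum]
  rw [show ((Nat.multinomial Finset.univ v : ℕ) : ℂ[X]) = C ((Nat.multinomial Finset.univ v : ℂ)) by
    simp, ← mul_assoc, ← map_mul, coeff_C_mul, coeff_X_pow]
  by_cases h : ∑ i : Fin (m+1), (i:ℕ) * v i = k
  · simp [h]
  · rw [if_neg h, if_neg (fun hk => h hk.symm)]; ring

private lemma stmt9_coeff0pow (m n : ℕ) (c : ℕ → ℂ) :
    ((∑ i : Fin (m+1), C (c i) * X ^ (i:ℕ)) ^ n).coeff 0 = c 0 ^ n := by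
  have := stmt9_coeffP m 0 (Nat.zero_le m) c
  simp only [coeff_zero_eq_eval_zero] at this ⊢
  rw [eval_pow, this]

private lemma stmt9_coeff1pow (m n : ℕ) (hm : 1 ≤ m) (c : ℕ → ℂ) :
    ((∑ i : Fin (m+1), C (c i) * X ^ (i:ℕ)) ^ n).coeff 1
      = (n : ℂ) * c 0 ^ (n-1) * c 1 := by
  set P : ℂ[X] := ∑ i : Fin (m+1), C (c i) * X ^ (i:ℕ) with hP
  have h1 : (P ^ n).coeff 1 = (derivative (P ^ n)).coeff 0 := by
    rw [coeff_derivative]; push_cast; ring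
  rw [h1, derivative_pow, mul_assoc, coeff_C_mul]
  rw [mul_coeff_zero, coeff_zero_eq_eval_zero, eval_pow, ← coeff_zero_eq_eval_zero,
    stmt9_coeffP m 0 (Nat.zero_le m) c]
  have : (derivative P).coeff 0 = c 1 := by
    rw [coeff_derivative, stmt9_coeffP m 1 hm c]; push_cast; ring
  rw [this]; ring

private lemma stmt9_uniq {n m : ℕ} (hn : 1 ≤ n) (p q : ℂ[X]) (h0 : p.coeff 0 = q.coeff 0)
    (hne : p.coeff 0 ≠ 0) (h : ∀ k ≤ m, (p ^ n).coeff k = (q ^ n).coeff k) :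
    ∀ j ≤ m, p.coeff j = q.coeff j := by
  intro j
  induction j using Nat.strong_induction_on with
  | _ j ih =>
    intro hj
    set t : ℂ[X] := ∑ i ∈ Finset.range n, p ^ i * q ^ (n - 1 - i) with ht
    have key : t * (p - q) = p ^ n - q ^ n := geom_sum₂_mul p q n
    have hcoeff : ((p - q) * t).coeff j = (p - q).coeff j * t.coeff 0 := by
      rw [Polynomial.coeff_mul]
      rw [Finset.sum_eq_single (j, 0)]
      · intro b hb hbne
        have hab := Finset.HasAntidiagonal.mem_antidiagonal.mp hb
        have hb1 : b.1 < j := by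
          rcases Nat.lt_or_ge b.1 j with h' | h'
          · exact h'
          · exfalso; apply hbne
            have h2 : b.2 = 0 := by omega
            have h1 : b.1 = j := by omega
            exact Prod.ext h1 h2
        rw [coeff_sub, ih b.1 hb1 (by omega), sub_self, zero_mul]
      · simp
    have ht0 : t.coeff 0 = (n : ℂ) * p.coeff 0 ^ (n - 1) := by
      simp only [ht, coeff_zero_eq_eval_zero, eval_finset_sum, eval_mul, eval_pow]
      rw [← coeff_zero_eq_eval_zero p, ← coeff_zero_eq_eval_zero q, ← h0]
      have : ∀ i ∈ Finset.range n, p.coeff 0 ^ i * p.coeff 0 ^ (n - 1 - i)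
          = p.coeff 0 ^ (n - 1) := by
        intro i hi; rw [← pow_add]; congr 1; have := Finset.mem_range.mp hi; omega
      rw [Finset.sum_congr rfl this, Finset.sum_const, Finset.card_range, nsmul_eq_mul]
    have hz : ((p - q) * t).coeff j = 0 := by
      rw [mul_comm, key, coeff_sub, h j hj, sub_self]
    rw [hcoeff, ht0] at hz
    have hzero : (p - q).coeff j = 0 := by
      rcases mul_eq_zero.mp hz with h' | h'
      · exact h'
      · exfalso; exact (mul_ne_zero (Nat.cast_ne_zero.mpr (by omega)) (pow_ne_zero _ hne)) h'
    rw [coeff_sub, sub_eq_zero] at hzero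
    exact hzero

private lemma stmt9_Bpow (m n : ℕ) (t : ℕ) :
    ∀ k ≤ m, (((∑ i : Fin (m+1), C (Ring.choose ((n:ℂ)⁻¹) i) * X ^ (i:ℕ))) ^ t).coeff k
      = Ring.choose ((t : ℂ) * (n:ℂ)⁻¹) k := by
  induction t with
  | zero =>
    intro k hk
    simp only [pow_zero, coeff_one, Nat.cast_zero, zero_mul, Ring.choose_zero_ite]
  | succ t ih =>
    intro k hk
    rw [pow_succ, Polynomial.coeff_mul]
    have : ∀ b ∈ Finset.HasAntidiagonal.antidiagonal k,
        (((∑ i : Fin (m+1), C (Ring.choose ((n:ℂ)⁻¹) i) * X ^ (i:ℕ))) ^ t).coeff b.1 *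
        ((∑ i : Fin (m+1), C (Ring.choose ((n:ℂ)⁻¹) i) * X ^ (i:ℕ))).coeff b.2
        = Ring.choose ((t : ℂ) * (n:ℂ)⁻¹) b.1 * Ring.choose ((n:ℂ)⁻¹) b.2 := by
      intro b hb
      have hab := Finset.HasAntidiagonal.mem_antidiagonal.mp hb
      rw [ih b.1 (by omega), stmt9_coeffP m b.2 (by omega) _]
    rw [Finset.sum_congr rfl this, ← Ring.add_choose_eq _ (Commute.all _ _)]
    congr 1
    push_cast
    ring

private lemma stmt9_smeval_desc {S : Type*} [CommRing S] (k : ℕ) (x : S) :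
    (descPochhammer ℤ k).smeval x = (descPochhammer S k).eval x := by
  rw [← aeval_eq_smeval x, aeval_def, eval₂_eq_eval_map, descPochhammer_map]

private lemma stmt9_factorial_smul_choose {S : Type*} [CommRing S] [BinomialRing S]
    (k : ℕ) (x : S) :
    (Nat.factorial k) • Ring.choose x k = (descPochhammer S k).eval x := by
  rw [← Ring.descPochhammer_eq_factorial_smul_choose, stmt9_smeval_desc]

private lemma stmt9_choose_cast (q : ℚ) (k : ℕ) :
    Ring.choose ((q : ℂ)) k = ((Ring.choose q k : ℚ) : ℂ) := by
  refine nsmul_right_injective (n := Nat.factorial k) (Nat.factorial_ne_zero k) ?_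
  show (Nat.factorial k) • Ring.choose ((q:ℂ)) k = (Nat.factorial k) • ((Ring.choose q k : ℚ) : ℂ)
  rw [stmt9_factorial_smul_choose]
  have h2 : ((((descPochhammer ℚ k).eval q) : ℚ) : ℂ) = (descPochhammer ℂ k).eval ((q : ℂ)) := by
    have h := Polynomial.eval₂_at_apply (p := descPochhammer ℚ k) (algebraMap ℚ ℂ) q
    rw [← eval_map, descPochhammer_map] at h
    simpa using h.symm
  rw [← h2, ← stmt9_factorial_smul_choose]
  rw [nsmul_eq_mul, nsmul_eq_mul]
  push_cast
  ring

private lemma stmt9_desc_eval_ne (n k : ℕ) (hn : 2 ≤ n) :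
    (descPochhammer ℚ k).eval ((n : ℚ)⁻¹) ≠ 0 := by
  induction k with
  | zero => simp
  | succ k ih =>
    rw [descPochhammer_succ_eval]
    refine mul_ne_zero ih ?_
    intro h
    have hk : (n : ℚ)⁻¹ = (k : ℚ) := by linarith [sub_eq_zero.mp h]
    have hn0 : (n : ℚ) ≠ 0 := by positivity
    have := congrArg (fun x => (n : ℚ) * x) hk
    simp only [mul_inv_cancel₀ hn0] at this
    rcases Nat.eq_zero_or_pos k with rfl | hk1
    · simp at this
    · have h2 : (2 : ℚ) ≤ (n : ℚ) := by exact_mod_cast hn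
      have h3 : (1 : ℚ) ≤ (k : ℚ) := by exact_mod_cast hk1
      nlinarith

private lemma stmt9_choose_ne_zero (n k : ℕ) (hn : 2 ≤ n) :
    Ring.choose ((n : ℚ)⁻¹) k ≠ 0 := by
  intro h
  apply stmt9_desc_eval_ne n k hn
  rw [← stmt9_factorial_smul_choose, h, smul_zero]

end Aux

/-- The relations c₀ⁿ = nc₀^{n-1}c₁ = 1 and the vanishing of the multinomial sums for
k₀ = 2,…,m force each c_j to be a fixed nonzero rational multiple (depending only on
n, m, j) of c₀. -/
theorem stmt9 (n m j : ℕ) (hn : 2 ≤ n) (hj : j ≤ m) :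
    ∃ s : ℚ, s ≠ 0 ∧ ∀ c : ℕ → ℂ,
      c 0 ^ n = 1 →
      (1 ≤ m → (n : ℂ) * c 0 ^ (n - 1) * c 1 = 1) →
      (∀ k₀ : ℕ, 2 ≤ k₀ → k₀ ≤ m →
        ∑ v ∈ (Finset.Nat.antidiagonalTuple (m + 1) n).filter
            (fun v => ∑ i : Fin (m + 1), (i : ℕ) * v i = k₀),
          (Nat.multinomial Finset.univ v : ℂ) * ∏ i : Fin (m + 1), c i ^ v i = 0) →
      c j = (s : ℂ) * c 0 := by
  classical
  open Polynomial in
  refine ⟨Ring.choose ((n : ℚ)⁻¹) j, stmt9_choose_ne_zero n j hn, fun c h0 h1 h2 => ?_⟩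
  have hn0 : (n : ℂ) ≠ 0 := Nat.cast_ne_zero.mpr (by omega)
  have hcast : ((((n : ℚ)⁻¹ : ℚ)) : ℂ) = (n : ℂ)⁻¹ := by push_cast; ring
  set p : ℂ[X] := ∑ i : Fin (m+1), C (c i) * X ^ (i:ℕ) with hp
  set B : ℂ[X] := ∑ i : Fin (m+1), C (Ring.choose ((n:ℂ)⁻¹) i) * X ^ (i:ℕ) with hB
  set q : ℂ[X] := C (c 0) * B with hq
  have hc0 : c 0 ≠ 0 := by
    intro h; rw [h, zero_pow (by omega)] at h0; exact zero_ne_one h0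
  -- coefficients of q ^ n
  have hqn : ∀ k ≤ m, (q ^ n).coeff k = (Nat.choose 1 k : ℂ) := by
    intro k hk
    rw [hq, mul_pow, ← C_pow, coeff_C_mul, stmt9_Bpow m n n k hk, h0, one_mul]
    rw [mul_inv_cancel₀ hn0]
    rw [show ((1 : ℂ)) = ((1 : ℕ) : ℂ) by norm_num, Ring.choose_natCast]
  -- coefficients of p ^ n
  have hpn : ∀ k ≤ m, (p ^ n).coeff k = (Nat.choose 1 k : ℂ) := by
    intro k hk
    match k with
    | 0 => rw [stmt9_coeff0pow, h0]; norm_num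
    | 1 => rw [stmt9_coeff1pow m n (by omega) c, h1 (by omega)]; norm_num
    | (k+2) =>
      rw [← stmt9_bridge, h2 (k+2) (by omega) hk]
      simp [Nat.choose_eq_zero_of_lt]
  have heq : ∀ k ≤ m, (p ^ n).coeff k = (q ^ n).coeff k := by
    intro k hk; rw [hpn k hk, hqn k hk]
  have hp0 : p.coeff 0 = c 0 := stmt9_coeffP m 0 (Nat.zero_le m) c
  have hq0 : q.coeff 0 = c 0 := by
    rw [hq, coeff_C_mul, stmt9_coeffP m 0 (Nat.zero_le m) _, Ring.choose_zero_right, mul_one]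
  have := stmt9_uniq (m := m) (by omega) p q (by rw [hp0, hq0]) (by rw [hp0]; exact hc0) heq j hj
  rw [stmt9_coeffP m j hj c] at this
  rw [hq, coeff_C_mul, stmt9_coeffP m j hj _] at this
  rw [this, ← hcast, stmt9_choose_cast]
  ring
end

section
/- Let p(z) = (a+ib)z^k + q(z) where a,b ∈ ℝ, a+ib ≠ 0, k ≥ 1, and deg q ≤ k-1, and set δ(p,θ) = a cos(kθ) - b sin(kθ). If δ(p,θ) > 0 then there exists r₀ such that for all r ≥ r₀, |e^{p(re^{iθ})}| ≥ e^{δ(p,θ)r^k/2}; if δ(p,θ) < 0 then there exists r₀ such that for all r ≥ r₀, |e^{p(re^{iθ})}| ≤ e^{δ(p,θ)r^k/2}. -/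
open Complex Polynomial

theorem stmt10 (a b : ℝ) (hab : (a : ℂ) + b * Complex.I ≠ 0) (k : ℕ) (hk : 1 ≤ k)
    (q : Polynomial ℂ) (hq : q.degree < k) (θ : ℝ) (hθ : θ ∈ Set.Ico 0 (2 * Real.pi))
    (p : ℂ → ℂ) (hp : p = fun z => ((a : ℂ) + b * Complex.I) * z ^ k + q.eval z)
    (δ : ℝ) (hδ : δ = a * Real.cos (k * θ) - b * Real.sin (k * θ)) :
    (0 < δ → ∃ r₀ : ℝ, ∀ r : ℝ, r₀ ≤ r →
      Real.exp (δ * r ^ k / 2) ≤ ‖Complex.exp (p (r * Complex.exp (θ * Complex.I)))‖) ∧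
    (δ < 0 → ∃ r₀ : ℝ, ∀ r : ℝ, r₀ ≤ r →
      ‖Complex.exp (p (r * Complex.exp (θ * Complex.I)))‖ ≤ Real.exp (δ * r ^ k / 2)) := by
  set C := ∑ i ∈ Finset.range k, ‖q.coeff i‖ with hC
  have hCnn : 0 ≤ C := Finset.sum_nonneg fun i _ => norm_nonneg _
  have hdeg : q.natDegree < k := by
    rcases eq_or_ne q 0 with h | h
    · simp [h]; omega
    · exact (Polynomial.natDegree_lt_iff_degree_lt h).2 hq
  have hre : ∀ r : ℝ, (p ((r : ℂ) * Complex.exp (θ * Complex.I))).re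
      = δ * r ^ k + (q.eval ((r : ℂ) * Complex.exp (θ * Complex.I))).re := by
    intro r
    rw [hp]
    simp only [Complex.add_re]
    congr 1
    have h1 : ((r : ℂ) * Complex.exp (θ * Complex.I)) ^ k
        = ((r ^ k : ℝ) : ℂ) * Complex.exp (((k * θ : ℝ)) * Complex.I) := by
      rw [mul_pow, ← Complex.exp_nat_mul]
      push_cast
      ring_nf
    rw [h1, hδ]
    simp only [Complex.mul_re, Complex.mul_im, Complex.add_re, Complex.add_im,
      Complex.ofReal_re, Complex.ofReal_im, Complex.I_re, Complex.I_im,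
      Complex.exp_ofReal_mul_I_re, Complex.exp_ofReal_mul_I_im]
    ring
  have hbound : ∀ r : ℝ, 1 ≤ r →
      |(q.eval ((r : ℂ) * Complex.exp (θ * Complex.I))).re| ≤ C * r ^ (k - 1) := by
    intro r hr
    have hr0 : (0:ℝ) ≤ r := le_trans zero_le_one hr
    set z := (r : ℂ) * Complex.exp (θ * Complex.I) with hz
    have hzabs : ‖z‖ = r := by
      rw [hz, norm_mul, Complex.norm_exp]
      simp [_root_.abs_of_nonneg hr0]
    calc |(q.eval z).re| ≤ ‖q.eval z‖ := Complex.abs_re_le_norm _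
      _ ≤ ∑ i ∈ Finset.range k, ‖q.coeff i * z ^ i‖ := by
          rw [Polynomial.eval_eq_sum_range' hdeg]
          exact norm_sum_le _ _
      _ ≤ ∑ i ∈ Finset.range k, ‖q.coeff i‖ * r ^ (k - 1) := by
          apply Finset.sum_le_sum
          intro i hi
          have hik : i < k := Finset.mem_range.1 hi
          rw [norm_mul, norm_pow, hzabs]
          exact mul_le_mul_of_nonneg_left
            (pow_le_pow_right₀ hr (by omega : i ≤ k - 1)) (norm_nonneg _)
      _ = C * r ^ (k - 1) := by rw [← Finset.sum_mul]
  have hpow : ∀ r : ℝ, r ^ k = r * r ^ (k - 1) := by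
    intro r
    conv_lhs => rw [show k = 1 + (k - 1) by omega]
    rw [pow_add, pow_one]
  constructor
  · intro hδ0
    refine ⟨max 1 (2 * C / δ), fun r hr => ?_⟩
    have hr1 : 1 ≤ r := le_trans (le_max_left _ _) hr
    have hr2 : 2 * C / δ ≤ r := le_trans (le_max_right _ _) hr
    have hr0 : (0:ℝ) ≤ r := le_trans zero_le_one hr1
    have h2C : 2 * C ≤ δ * r := by
      rw [div_le_iff₀ hδ0] at hr2; linarith [hr2]
    rw [Complex.norm_exp, Real.exp_le_exp, hre r]
    have hb := hbound r hr1
    have hpk : (0:ℝ) ≤ r ^ (k-1) := pow_nonneg hr0 _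
    have : C * r ^ (k - 1) ≤ δ * r ^ k / 2 := by
      rw [hpow r]; nlinarith
    have := abs_le.1 hb
    linarith [this.1]
  · intro hδ0
    refine ⟨max 1 (2 * C / (-δ)), fun r hr => ?_⟩
    have hr1 : 1 ≤ r := le_trans (le_max_left _ _) hr
    have hr2 : 2 * C / (-δ) ≤ r := le_trans (le_max_right _ _) hr
    have hr0 : (0:ℝ) ≤ r := le_trans zero_le_one hr1
    have h2C : 2 * C ≤ (-δ) * r := by
      rw [div_le_iff₀ (by linarith : (0:ℝ) < -δ)] at hr2; linarith [hr2]
    rw [Complex.norm_exp, Real.exp_le_exp, hre r]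
    have hb := hbound r hr1
    have hpk : (0:ℝ) ≤ r ^ (k-1) := pow_nonneg hr0 _
    have : C * r ^ (k - 1) ≤ (-δ) * r ^ k / 2 := by
      rw [hpow r]; nlinarith
    have := abs_le.1 hb
    linarith [this.2]
end

section
/- Suppose k = 1 (so f = κe^h with h = c₀e^z + cz) and the equation f'' - (e^{2z} + b₂e^z + b₃)f = 0 holds, where κ = ∑_{i=0}^k a_i e^{iz}, a₀a_k ≠ 0, c₀² = 1, c² = b₃. Then necessarily 2c₀(c+k) + c₀ = b₂ and the coefficients satisfy 2c₀(k+1-i)a_{i-1} = (2ic + i²)a_i for i = 0,1,…,k (with a_{-1} := 0). Conversely, given constants satisfying these relations, f = κe^h solves the equation. -/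
open Complex Finset

private lemma expDeriv (m z : ℂ) :
    HasDerivAt (fun z => Complex.exp (m * z)) (m * Complex.exp (m * z)) z := by
  simpa [mul_comm] using ((hasDerivAt_id' z).const_mul m).cexp

private lemma coeffs_zero (n : ℕ) (C : ℕ → ℂ)
    (H : ∀ z : ℂ, ∑ j ∈ Finset.range n, C j * Complex.exp (j * z) = 0) :
    ∀ j, j < n → C j = 0 := by
  intro j hj
  set P : Polynomial ℂ := ∑ i ∈ Finset.range n, Polynomial.C (C i) * Polynomial.X ^ i with hP
  have hPz : P = 0 := by
    apply Polynomial.eq_zero_of_infinite_isRoot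
    have hinj : Function.Injective (fun x : ℝ => Complex.exp (x : ℂ)) := by
      intro x y hxy
      apply Real.exp_injective
      have : ((Real.exp x : ℝ) : ℂ) = ((Real.exp y : ℝ) : ℂ) := by
        simpa [Complex.ofReal_exp] using hxy
      exact_mod_cast this
    apply Set.infinite_of_injective_forall_mem hinj
    intro x
    show P.IsRoot _
    simp only [hP, Polynomial.IsRoot, Polynomial.eval_finset_sum, Polynomial.eval_mul,
      Polynomial.eval_C, Polynomial.eval_pow, Polynomial.eval_X]
    rw [← H (x : ℂ)]
    exact Finset.sum_congr rfl fun i _ => by rw [Complex.exp_nat_mul]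
  have hco := congrArg (fun p : Polynomial ℂ => p.coeff j) hPz
  simpa [hP, Polynomial.finset_sum_coeff, Polynomial.coeff_C_mul, Polynomial.coeff_X_pow,
    Finset.sum_ite_eq, hj] using hco

/-- Theorem 4.4(1): f = κe^h with h = c₀e^z + cz solves f'' = (e^{2z}+b₂e^z+b₃)f iff
b₂ = 2c₀(c+k)+c₀ and the coefficients satisfy the recursion. -/
theorem stmt11 (k : ℕ) (a : ℕ → ℂ) (ha0 : a 0 ≠ 0) (hak : a k ≠ 0)
    (c₀ c b₂ b₃ : ℂ) (hc₀ : c₀ ^ 2 = 1) (hc : c ^ 2 = b₃) (hb₂ : b₂ ≠ 0)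
    (κ h f : ℂ → ℂ)
    (hκ : κ = fun z => ∑ i ∈ Finset.range (k + 1), a i * Complex.exp (i * z))
    (hh : h = fun z => c₀ * Complex.exp z + c * z)
    (hf : f = fun z => κ z * Complex.exp (h z)) :
    (∀ z, deriv (deriv f) z = (Complex.exp (2 * z) + b₂ * Complex.exp z + b₃) * f z) ↔
      (2 * c₀ * (c + k) + c₀ = b₂ ∧
        ∀ i : ℕ, i ≤ k →
          2 * c₀ * ((k : ℂ) + 1 - i) * (if i = 0 then 0 else a (i - 1))
            = (2 * i * c + (i : ℂ) ^ 2) * a i) := by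
  simp only [hf, hκ, hh]
  -- coefficient function
  set C : ℕ → ℂ := fun j =>
      (if j ≤ k then ((j : ℂ) ^ 2 + 2 * c * j) * a j else 0) +
      (if j = 0 then 0 else (2 * c₀ * ((j : ℂ) - 1) + (c₀ + 2 * c₀ * c - b₂)) * a (j - 1))
    with hCdef
  -- derivatives
  have hS0d : ∀ z : ℂ, HasDerivAt
      (fun z => ∑ i ∈ Finset.range (k + 1), a i * Complex.exp (i * z))
      (∑ i ∈ Finset.range (k + 1), a i * ((i : ℂ) * Complex.exp (i * z))) z :=
    fun z => HasDerivAt.fun_sum fun i _ => (expDeriv i z).const_mul (a i)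
  have hS1d : ∀ z : ℂ, HasDerivAt
      (fun z => ∑ i ∈ Finset.range (k + 1), a i * ((i : ℂ) * Complex.exp (i * z)))
      (∑ i ∈ Finset.range (k + 1), a i * ((i : ℂ) * ((i : ℂ) * Complex.exp (i * z)))) z :=
    fun z => HasDerivAt.fun_sum fun i _ => ((expDeriv i z).const_mul (i : ℂ)).const_mul (a i)
  have hhd : ∀ z : ℂ, HasDerivAt (fun z => c₀ * Complex.exp z + c * z)
      (c₀ * Complex.exp z + c * 1) z :=
    fun z => ((Complex.hasDerivAt_exp z).const_mul c₀).add ((hasDerivAt_id' z).const_mul c)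
  have hHvd : ∀ z : ℂ, HasDerivAt (fun z => c₀ * Complex.exp z + c * 1)
      (c₀ * Complex.exp z + 0) z :=
    fun z => ((Complex.hasDerivAt_exp z).const_mul c₀).add (hasDerivAt_const z (c * 1))
  have hd1 : deriv (fun z => (∑ i ∈ Finset.range (k + 1), a i * Complex.exp (i * z)) *
      Complex.exp (c₀ * Complex.exp z + c * z))
      = fun z => (∑ i ∈ Finset.range (k + 1), a i * ((i : ℂ) * Complex.exp (i * z))) *
          Complex.exp (c₀ * Complex.exp z + c * z) +
        (∑ i ∈ Finset.range (k + 1), a i * Complex.exp (i * z)) *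
          (Complex.exp (c₀ * Complex.exp z + c * z) * (c₀ * Complex.exp z + c * 1)) :=
    funext fun z => ((hS0d z).mul ((hhd z).cexp)).deriv
  have hdd : ∀ z : ℂ, deriv (deriv (fun z =>
      (∑ i ∈ Finset.range (k + 1), a i * Complex.exp (i * z)) *
        Complex.exp (c₀ * Complex.exp z + c * z))) z
      = ((∑ i ∈ Finset.range (k + 1), a i * ((i : ℂ) * ((i : ℂ) * Complex.exp (i * z)))) *
          Complex.exp (c₀ * Complex.exp z + c * z) +
        (∑ i ∈ Finset.range (k + 1), a i * ((i : ℂ) * Complex.exp (i * z))) *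
          (Complex.exp (c₀ * Complex.exp z + c * z) * (c₀ * Complex.exp z + c * 1))) +
        ((∑ i ∈ Finset.range (k + 1), a i * ((i : ℂ) * Complex.exp (i * z))) *
          (Complex.exp (c₀ * Complex.exp z + c * z) * (c₀ * Complex.exp z + c * 1)) +
        (∑ i ∈ Finset.range (k + 1), a i * Complex.exp (i * z)) *
          ((Complex.exp (c₀ * Complex.exp z + c * z) * (c₀ * Complex.exp z + c * 1)) *
              (c₀ * Complex.exp z + c * 1) +
            Complex.exp (c₀ * Complex.exp z + c * z) * (c₀ * Complex.exp z + 0))) := by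
    intro z
    rw [hd1]
    exact (((hS1d z).mul ((hhd z).cexp)).add
      ((hS0d z).mul (((hhd z).cexp).mul (hHvd z)))).deriv
  -- the coefficient sum expansion
  have hCsum : ∀ z : ℂ, (∑ j ∈ Finset.range (k + 2), C j * Complex.exp (j * z))
      = (∑ i ∈ Finset.range (k + 1), a i * ((i : ℂ) * ((i : ℂ) * Complex.exp (i * z)))) +
        2 * (∑ i ∈ Finset.range (k + 1), a i * ((i : ℂ) * Complex.exp (i * z))) *
          (c₀ * Complex.exp z + c * 1) +
        (c₀ + 2 * c₀ * c - b₂) * Complex.exp z *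
          (∑ i ∈ Finset.range (k + 1), a i * Complex.exp (i * z)) := by
    intro z
    have split : (∑ j ∈ Finset.range (k + 2), C j * Complex.exp (j * z))
        = (∑ j ∈ Finset.range (k + 2),
            (if j ≤ k then ((j : ℂ) ^ 2 + 2 * c * j) * a j else 0) * Complex.exp (j * z)) +
          (∑ j ∈ Finset.range (k + 2),
            (if j = 0 then 0 else (2 * c₀ * ((j : ℂ) - 1) + (c₀ + 2 * c₀ * c - b₂)) * a (j - 1)) *
              Complex.exp (j * z)) := by
      rw [← Finset.sum_add_distrib]
      exact Finset.sum_congr rfl fun j _ => by rw [hCdef]; ring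
    have e1 : (∑ j ∈ Finset.range (k + 2),
        (if j ≤ k then ((j : ℂ) ^ 2 + 2 * c * j) * a j else 0) * Complex.exp (j * z))
        = ∑ j ∈ Finset.range (k + 1), ((j : ℂ) ^ 2 + 2 * c * j) * a j * Complex.exp (j * z) := by
      rw [Finset.sum_range_succ, if_neg (by omega), zero_mul, add_zero]
      exact Finset.sum_congr rfl fun j hj => by
        rw [if_pos (Nat.lt_succ_iff.mp (Finset.mem_range.mp hj))]
    have e2 : (∑ j ∈ Finset.range (k + 2),
        (if j = 0 then 0 else (2 * c₀ * ((j : ℂ) - 1) + (c₀ + 2 * c₀ * c - b₂)) * a (j - 1)) *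
          Complex.exp (j * z))
        = ∑ i ∈ Finset.range (k + 1), (2 * c₀ * (i : ℂ) + (c₀ + 2 * c₀ * c - b₂)) * a i *
            (Complex.exp (i * z) * Complex.exp z) := by
      rw [Finset.sum_range_succ']
      rw [if_pos (Eq.refl (0 : ℕ)), zero_mul, add_zero]
      refine Finset.sum_congr rfl fun i _ => ?_
      rw [if_neg (Nat.succ_ne_zero i), Nat.add_sub_cancel]
      have hce : Complex.exp ((↑(i + 1) : ℂ) * z) = Complex.exp ((i : ℂ) * z) * Complex.exp z := by
        push_cast
        rw [add_mul, one_mul, Complex.exp_add]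
      rw [hce]
      push_cast
      ring
    rw [split, e1, e2]
    rw [show (2 : ℂ) * (∑ i ∈ Finset.range (k + 1), a i * ((i : ℂ) * Complex.exp (i * z))) *
        (c₀ * Complex.exp z + c * 1)
        = ∑ i ∈ Finset.range (k + 1), 2 * (a i * ((i : ℂ) * Complex.exp (i * z))) *
            (c₀ * Complex.exp z + c * 1) from by rw [Finset.mul_sum, Finset.sum_mul]]
    rw [show (c₀ + 2 * c₀ * c - b₂) * Complex.exp z *
        (∑ i ∈ Finset.range (k + 1), a i * Complex.exp (i * z))
        = ∑ i ∈ Finset.range (k + 1), (c₀ + 2 * c₀ * c - b₂) * Complex.exp z *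
            (a i * Complex.exp (i * z)) from Finset.mul_sum _ _ _]
    rw [← Finset.sum_add_distrib, ← Finset.sum_add_distrib, ← Finset.sum_add_distrib]
    exact Finset.sum_congr rfl fun i _ => by ring
  -- per-point equivalence
  have hz : ∀ z : ℂ,
      ((((∑ i ∈ Finset.range (k + 1), a i * ((i : ℂ) * ((i : ℂ) * Complex.exp (i * z)))) *
          Complex.exp (c₀ * Complex.exp z + c * z) +
        (∑ i ∈ Finset.range (k + 1), a i * ((i : ℂ) * Complex.exp (i * z))) *
          (Complex.exp (c₀ * Complex.exp z + c * z) * (c₀ * Complex.exp z + c * 1))) +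
        ((∑ i ∈ Finset.range (k + 1), a i * ((i : ℂ) * Complex.exp (i * z))) *
          (Complex.exp (c₀ * Complex.exp z + c * z) * (c₀ * Complex.exp z + c * 1)) +
        (∑ i ∈ Finset.range (k + 1), a i * Complex.exp (i * z)) *
          ((Complex.exp (c₀ * Complex.exp z + c * z) * (c₀ * Complex.exp z + c * 1)) *
              (c₀ * Complex.exp z + c * 1) +
            Complex.exp (c₀ * Complex.exp z + c * z) * (c₀ * Complex.exp z + 0))))
        = (Complex.exp (2 * z) + b₂ * Complex.exp z + b₃) *
            ((∑ i ∈ Finset.range (k + 1), a i * Complex.exp (i * z)) *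
              Complex.exp (c₀ * Complex.exp z + c * z)))
      ↔ (∑ j ∈ Finset.range (k + 2), C j * Complex.exp (j * z)) = 0 := by
    intro z
    have h2 : Complex.exp (2 * z) = Complex.exp z * Complex.exp z := by
      rw [two_mul, Complex.exp_add]
    have key : (((∑ i ∈ Finset.range (k + 1), a i * ((i : ℂ) * ((i : ℂ) * Complex.exp (i * z)))) *
          Complex.exp (c₀ * Complex.exp z + c * z) +
        (∑ i ∈ Finset.range (k + 1), a i * ((i : ℂ) * Complex.exp (i * z))) *
          (Complex.exp (c₀ * Complex.exp z + c * z) * (c₀ * Complex.exp z + c * 1))) +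
        ((∑ i ∈ Finset.range (k + 1), a i * ((i : ℂ) * Complex.exp (i * z))) *
          (Complex.exp (c₀ * Complex.exp z + c * z) * (c₀ * Complex.exp z + c * 1)) +
        (∑ i ∈ Finset.range (k + 1), a i * Complex.exp (i * z)) *
          ((Complex.exp (c₀ * Complex.exp z + c * z) * (c₀ * Complex.exp z + c * 1)) *
              (c₀ * Complex.exp z + c * 1) +
            Complex.exp (c₀ * Complex.exp z + c * z) * (c₀ * Complex.exp z + 0))))
        - (Complex.exp (2 * z) + b₂ * Complex.exp z + b₃) *
            ((∑ i ∈ Finset.range (k + 1), a i * Complex.exp (i * z)) *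
              Complex.exp (c₀ * Complex.exp z + c * z))
        = (∑ j ∈ Finset.range (k + 2), C j * Complex.exp (j * z)) *
            Complex.exp (c₀ * Complex.exp z + c * z) := by
      rw [hCsum z, h2]
      linear_combination ((∑ i ∈ Finset.range (k + 1), a i * Complex.exp (i * z)) *
        Complex.exp (c₀ * Complex.exp z + c * z)) *
          ((Complex.exp z * Complex.exp z) * hc₀ + hc)
    constructor
    · intro heq
      rw [heq, sub_self] at key
      exact ((mul_eq_zero.mp key.symm).resolve_right (Complex.exp_ne_zero _))
    · intro heq
      rw [heq, zero_mul] at key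
      exact sub_eq_zero.mp key
  constructor
  · intro hsol
    have hcz : ∀ z : ℂ, (∑ j ∈ Finset.range (k + 2), C j * Complex.exp (j * z)) = 0 :=
      fun z => (hz z).mp (by rw [← hdd z]; exact hsol z)
    have hC0 : ∀ j, j < k + 2 → C j = 0 := coeffs_zero (k + 2) C hcz
    have hCk1 := hC0 (k + 1) (by omega)
    rw [hCdef] at hCk1
    simp only [if_neg (by omega : ¬ (k + 1 ≤ k)), if_neg (Nat.succ_ne_zero k),
      Nat.add_sub_cancel, zero_add] at hCk1
    have hDk : 2 * c₀ * ((↑(k + 1) : ℂ) - 1) + (c₀ + 2 * c₀ * c - b₂) = 0 :=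
      (mul_eq_zero.mp hCk1).resolve_right hak
    have hDk' : 2 * c₀ * (k : ℂ) + (c₀ + 2 * c₀ * c - b₂) = 0 := by
      push_cast at hDk
      linear_combination hDk
    constructor
    · linear_combination hDk'
    · intro i hi
      by_cases h0 : i = 0
      · subst h0; simp
      · have hCi := hC0 i (by omega)
        simp only [hCdef] at hCi
        rw [if_pos hi, if_neg h0] at hCi
        rw [if_neg h0]
        linear_combination a (i - 1) * hDk' - hCi
  · rintro ⟨hb, hrec⟩
    have hC0 : ∀ j, j < k + 2 → C j = 0 := by
      intro j hj
      simp only [hCdef]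
      rcases Nat.lt_or_ge j (k + 1) with hjk | hjk
      · have hjk' : j ≤ k := by omega
        rw [if_pos hjk']
        by_cases h0 : j = 0
        · subst h0; simp
        · rw [if_neg h0]
          have hr := hrec j hjk'
          rw [if_neg h0] at hr
          linear_combination a (j - 1) * hb - hr
      · have hj1 : j = k + 1 := by omega
        subst hj1
        rw [if_neg (by omega : ¬ (k + 1 ≤ k)), if_neg (Nat.succ_ne_zero k),
          Nat.add_sub_cancel, zero_add]
        push_cast
        linear_combination a k * hb
    intro z
    rw [hdd z]
    exact (hz z).mpr (Finset.sum_eq_zero fun j hj => by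
      rw [hC0 j (Finset.mem_range.mp hj), zero_mul])
end

section
/- (Converse of Corollary 4.5, existence) Let k₁, k₂ be distinct nonnegative integers, set b₂ = k₁ - k₂ and b₃ = (k₁+k₂+1)²/4 and c = -(k₁+k₂+1)/2. Then with c₀ = 1, there exist constants a₀,…,a_{k₁} with a₀ = 1 and a_{k₁} ≠ 0 satisfying the recursion 2(k₁+1-i)a_{i-1} = (2ic+i²)a_i for i = 1,…,k₁ (with a_{-1} = 0 making the i = 0 equation trivial), so that f₁ = (∑_{i=0}^{k₁} a_i e^{iz})e^{e^z + cz} is a nontrivial solution of f'' - (e^{2z} + b₂e^z + b₃)f = 0 with finitely many zeros' exponent of convergence. -/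
open Complex Finset

noncomputable def aseq (k₁ : ℕ) (c : ℂ) : ℕ → ℂ
  | 0 => 1
  | j + 1 => 2 * ((k₁ : ℂ) - (j : ℂ)) / (((j : ℂ) + 1) * (2 * c + ((j : ℂ) + 1))) * aseq k₁ c j

/-- Converse of Corollary 4.5: existence of a polynomial-in-e^z solution with finitely many
zeros when b₂ = k₁ - k₂ and 4b₃ = (k₁+k₂+1)². -/
theorem stmt15 (k₁ k₂ : ℕ) (hk : k₁ ≠ k₂) (b₂ b₃ c : ℂ)
    (hb₂ : b₂ = (k₁ : ℂ) - k₂) (hb₃ : b₃ = ((k₁ : ℂ) + k₂ + 1) ^ 2 / 4)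
    (hc : c = -((k₁ : ℂ) + k₂ + 1) / 2) :
    ∃ a : ℕ → ℂ, a 0 = 1 ∧ a k₁ ≠ 0 ∧
      (∀ i : ℕ, 1 ≤ i → i ≤ k₁ →
        2 * ((k₁ : ℂ) + 1 - i) * a (i - 1) = (2 * i * c + (i : ℂ) ^ 2) * a i) ∧
      (∀ z : ℂ,
        deriv (deriv (fun w => (∑ i ∈ Finset.range (k₁ + 1), a i * Complex.exp (i * w)) *
            Complex.exp (Complex.exp w + c * w))) z
          = (Complex.exp (2 * z) + b₂ * Complex.exp z + b₃) *
            ((∑ i ∈ Finset.range (k₁ + 1), a i * Complex.exp (i * z)) *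
              Complex.exp (Complex.exp z + c * z))) := by
  set a : ℕ → ℂ := aseq k₁ c with ha
  -- denominator nonzero
  have hden : ∀ j : ℕ, j + 1 ≤ k₁ → ((j : ℂ) + 1) * (2 * c + ((j : ℂ) + 1)) ≠ 0 := by
    intro j hj
    apply mul_ne_zero
    · intro h
      exact Nat.succ_ne_zero j (by exact_mod_cast h)
    · have h1 : 2 * c + ((j : ℂ) + 1) = ((j + 1 : ℕ) : ℂ) - ((k₁ + k₂ + 1 : ℕ) : ℂ) := by
        rw [hc]; push_cast; ring
      rw [h1]
      rw [sub_ne_zero, Ne, Nat.cast_inj]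
      omega
  -- recursion
  have hrec : ∀ i : ℕ, 1 ≤ i → i ≤ k₁ →
      2 * ((k₁ : ℂ) + 1 - i) * a (i - 1) = (2 * i * c + (i : ℂ) ^ 2) * a i := by
    intro i h1 h2
    obtain ⟨j, rfl⟩ := Nat.exists_eq_succ_of_ne_zero (show i ≠ 0 by omega)
    have hD := hden j (by omega)
    have hs : a (j + 1) = 2 * ((k₁ : ℂ) - (j : ℂ)) / (((j : ℂ) + 1) * (2 * c + ((j : ℂ) + 1))) * a j := rfl
    show 2 * ((k₁ : ℂ) + 1 - (↑(j + 1) : ℂ)) * a (j + 1 - 1) = (2 * (↑(j + 1) : ℂ) * c + (↑(j + 1) : ℂ) ^ 2) * a (j + 1)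
    rw [Nat.add_sub_cancel, hs]
    push_cast
    rw [show (2 * ((j:ℂ)+1) * c + ((j:ℂ)+1)^2) = ((j:ℂ)+1) * (2*c + ((j:ℂ)+1)) by ring, div_mul_eq_mul_div, mul_div_assoc', mul_div_cancel_left₀ _ hD]
    ring
  -- nonvanishing
  have hne : ∀ i : ℕ, i ≤ k₁ → a i ≠ 0 := by
    intro i
    induction i with
    | zero => intro _; simp [ha, aseq]
    | succ j ih =>
      intro hj
      have h1 : a (j + 1) = 2 * ((k₁ : ℂ) - (j : ℂ)) / (((j : ℂ) + 1) * (2 * c + ((j : ℂ) + 1))) * a j := rfl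
      rw [h1]
      apply mul_ne_zero
      · apply div_ne_zero
        · apply mul_ne_zero two_ne_zero
          rw [sub_ne_zero, Ne, Nat.cast_inj]
          omega
        · exact hden j hj
      · exact ih (by omega)
  have ha0 : a 0 = 1 := by simp [ha, aseq]
  refine ⟨a, ha0, hne k₁ le_rfl, hrec, ?_⟩
  -- the key polynomial identity
  have key : ∀ u : ℂ, ∑ i ∈ Finset.range (k₁ + 1),
      a i * u ^ i * (((i : ℂ) ^ 2 + 2 * i * c) + 2 * ((i : ℂ) - (k₁ : ℂ)) * u) = 0 := by
    intro u
    have hsplit : ∑ i ∈ Finset.range (k₁ + 1),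
        a i * u ^ i * (((i : ℂ) ^ 2 + 2 * i * c) + 2 * ((i : ℂ) - (k₁ : ℂ)) * u)
        = (∑ i ∈ Finset.range (k₁ + 1), a i * u ^ i * ((i : ℂ) ^ 2 + 2 * i * c))
          + ∑ i ∈ Finset.range (k₁ + 1), a i * u ^ i * (2 * ((i : ℂ) - (k₁ : ℂ)) * u) := by
      rw [← Finset.sum_add_distrib]
      exact Finset.sum_congr rfl fun i _ => by ring
    rw [hsplit]
    rw [Finset.sum_range_succ' (fun i => a i * u ^ i * ((i : ℂ) ^ 2 + 2 * i * c)) k₁]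
    rw [Finset.sum_range_succ (fun i => a i * u ^ i * (2 * ((i : ℂ) - (k₁ : ℂ)) * u)) k₁]
    have hterm : ∀ j ∈ Finset.range k₁,
        a (j + 1) * u ^ (j + 1) * (((j + 1 : ℕ) : ℂ) ^ 2 + 2 * ((j + 1 : ℕ) : ℂ) * c)
        = - (a j * u ^ j * (2 * ((j : ℂ) - (k₁ : ℂ)) * u)) := by
      intro j hj
      rw [Finset.mem_range] at hj
      have hr := hrec (j + 1) (by omega) (by omega)
      rw [Nat.add_sub_cancel] at hr
      have : (((j + 1 : ℕ) : ℂ) ^ 2 + 2 * ((j + 1 : ℕ) : ℂ) * c) * a (j + 1)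
          = 2 * ((k₁ : ℂ) + 1 - ((j + 1 : ℕ) : ℂ)) * a j := by linear_combination -hr
      push_cast at this ⊢
      have h2 : a (j + 1) * u ^ (j + 1) * (((j : ℂ) + 1) ^ 2 + 2 * ((j : ℂ) + 1) * c)
          = (2 * ((k₁ : ℂ) + 1 - ((j : ℂ) + 1)) * a j) * u ^ (j + 1) := by
        rw [← this]; ring
      rw [h2]; ring
    rw [Finset.sum_congr rfl hterm, Finset.sum_neg_distrib]
    have hf0 : a 0 * u ^ 0 * (((0 : ℕ) : ℂ) ^ 2 + 2 * ((0 : ℕ) : ℂ) * c) = 0 := by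
      norm_num
    have hgk : a k₁ * u ^ k₁ * (2 * ((k₁ : ℂ) - (k₁ : ℂ)) * u) = 0 := by
      rw [sub_self]; ring
    rw [hf0, hgk]
    ring
  -- derivative setup
  have hE : ∀ z : ℂ, HasDerivAt (fun w => Complex.exp (Complex.exp w + c * w))
      ((Complex.exp z + c) * Complex.exp (Complex.exp z + c * z)) z := by
    intro z
    have h1 : HasDerivAt (fun w : ℂ => Complex.exp w + c * w) (Complex.exp z + c) z := by
      simpa using (Complex.hasDerivAt_exp z).fun_add ((hasDerivAt_id z).const_mul c)
    simpa [mul_comm] using h1.cexp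
  have hterm : ∀ (i : ℕ) (z : ℂ), HasDerivAt (fun w => a i * Complex.exp ((i : ℂ) * w))
      ((i : ℂ) * (a i * Complex.exp ((i : ℂ) * z))) z := by
    intro i z
    have h0 : HasDerivAt (fun w : ℂ => (i : ℂ) * w) (i : ℂ) z := by
      simpa using (hasDerivAt_id z).const_mul (i : ℂ)
    have := h0.cexp.const_mul (a i)
    exact this.congr_deriv (by ring)
  have hg : ∀ z : ℂ, HasDerivAt (fun w => ∑ i ∈ Finset.range (k₁ + 1), a i * Complex.exp ((i : ℂ) * w))
      (∑ i ∈ Finset.range (k₁ + 1), (i : ℂ) * (a i * Complex.exp ((i : ℂ) * z))) z := by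
    intro z
    exact HasDerivAt.fun_sum fun i _ => hterm i z
  have hg1 : ∀ z : ℂ, HasDerivAt
      (fun w => ∑ i ∈ Finset.range (k₁ + 1), (i : ℂ) * (a i * Complex.exp ((i : ℂ) * w)))
      (∑ i ∈ Finset.range (k₁ + 1), (i : ℂ) * ((i : ℂ) * (a i * Complex.exp ((i : ℂ) * z)))) z := by
    intro z
    exact HasDerivAt.fun_sum fun i _ => (hterm i z).const_mul (i : ℂ)
  intro z
  have hd1 : deriv (fun w => (∑ i ∈ Finset.range (k₁ + 1), a i * Complex.exp ((i : ℂ) * w)) *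
      Complex.exp (Complex.exp w + c * w))
      = fun w => (∑ i ∈ Finset.range (k₁ + 1), (i : ℂ) * (a i * Complex.exp ((i : ℂ) * w))) *
          Complex.exp (Complex.exp w + c * w)
        + (∑ i ∈ Finset.range (k₁ + 1), a i * Complex.exp ((i : ℂ) * w)) *
          ((Complex.exp w + c) * Complex.exp (Complex.exp w + c * w)) := by
    funext w
    exact ((hg w).mul (hE w)).deriv
  rw [hd1]
  have hEE : HasDerivAt (fun w => (Complex.exp w + c) * Complex.exp (Complex.exp w + c * w))
      (Complex.exp z * Complex.exp (Complex.exp z + c * z)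
        + (Complex.exp z + c) * ((Complex.exp z + c) * Complex.exp (Complex.exp z + c * z))) z :=
    ((Complex.hasDerivAt_exp z).add_const c).mul (hE z)
  have hstep2 := (((hg1 z).fun_mul (hE z)).fun_add ((hg z).fun_mul hEE))
  rw [hstep2.deriv]
  -- now pure algebra
  have hexp2 : Complex.exp (2 * z) = Complex.exp z * Complex.exp z := by
    rw [show (2 : ℂ) * z = z + z by ring, Complex.exp_add]
  simp only [Complex.exp_nat_mul, hexp2]
  have key2 : ∀ u : ℂ,
      (∑ i ∈ Finset.range (k₁ + 1), (i : ℂ) * ((i : ℂ) * (a i * u ^ i)))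
        + 2 * c * (∑ i ∈ Finset.range (k₁ + 1), (i : ℂ) * (a i * u ^ i))
        + 2 * u * (∑ i ∈ Finset.range (k₁ + 1), (i : ℂ) * (a i * u ^ i))
        - 2 * (k₁ : ℂ) * u * (∑ i ∈ Finset.range (k₁ + 1), a i * u ^ i) = 0 := by
    intro u
    calc (∑ i ∈ Finset.range (k₁ + 1), (i : ℂ) * ((i : ℂ) * (a i * u ^ i)))
        + 2 * c * (∑ i ∈ Finset.range (k₁ + 1), (i : ℂ) * (a i * u ^ i))
        + 2 * u * (∑ i ∈ Finset.range (k₁ + 1), (i : ℂ) * (a i * u ^ i))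
        - 2 * (k₁ : ℂ) * u * (∑ i ∈ Finset.range (k₁ + 1), a i * u ^ i)
        = ∑ i ∈ Finset.range (k₁ + 1),
            a i * u ^ i * (((i : ℂ) ^ 2 + 2 * i * c) + 2 * ((i : ℂ) - (k₁ : ℂ)) * u) := by
          rw [Finset.mul_sum, Finset.mul_sum, Finset.mul_sum,
            ← Finset.sum_add_distrib, ← Finset.sum_add_distrib, ← Finset.sum_sub_distrib]
          exact Finset.sum_congr rfl fun i _ => by ring
      _ = 0 := key u
  have core := key2 (Complex.exp z)
  subst hb₂ hb₃
  rw [hc] at core ⊢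
  linear_combination core * Complex.exp (Complex.exp z + -((k₁ : ℂ) + k₂ + 1) / 2 * z)
end
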